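/- Let B be the bilateral backward shift on ℓ^p(ℤ, ω) with sup_{n∈ℤ} ω_n/ω_{n+1} < ∞. Suppose x, y ∈ ℓ^p(ℤ, ω), y_{k_0} ≠ 0, λ_i ∈ ℂ \ {0}, n_i strictly increasing, and ‖λ_i B^{n_i} x − y‖ < δ_i where δ_i → 0 and δ_i < ω_{k_0}|y_{k_0}|/2 for all i. Then for each fixed i, (|λ_j|/|λ_i|) · ω_{−n_j + n_i + k_0} → 0 as j → ∞. -/

import Mathlib

/-!
Point evaluation is bounded on the weighted space: `ω k * ‖z k‖ ≤ ‖z‖`, and `ω k * ‖y k‖ → 0`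
along the cofinite filter. Evaluating `λ_j B^{n_j} x - y` at `m_j = k₀ + n_i - n_j` reads the
same coordinate `X = x (k₀ + n_i)` as for index `i`, so
`ω (m_j) ‖λ_j X‖ ≤ δ_j + ω (m_j) ‖y (m_j)‖ → 0`, while the hypothesis on `δ_i` forces
`λ_i X ≠ 0`. Dividing by `‖λ_i X‖` gives the claim.
-/

open MeasureTheory Filter Topology
open scoped ENNReal

noncomputable section

/-- The weighted measure on the index set `I` giving the point `k` mass `(ω k) ^ p`,
so that `Lp ℂ p (wMeasure p ω)` is the weighted sequence space `ℓ^p(I, ω)`. -/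
def wMeasure {I : Type*} [MeasurableSpace I] (p : ENNReal) (ω : I → ℝ) : Measure I :=
  Measure.sum (fun k => ENNReal.ofReal ((ω k) ^ p.toReal) • Measure.dirac k)

theorem toReal_ofReal_mul_enorm {E : Type*} [SeminormedAddGroup E] {a : ℝ} (ha : 0 ≤ a)
    (c : E) :
    (ENNReal.ofReal a * ‖c‖ₑ).toReal = a * ‖c‖ := by
  rw [ENNReal.toReal_mul, ENNReal.toReal_ofReal ha, toReal_enorm]

section WeightedLp

variable {I : Type*} [MeasurableSpace I] [MeasurableSingletonClass I] {p : ℝ≥0∞} {ω : I → ℝ}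

theorem wMeasure_singleton (k : I) : wMeasure p ω {k} = ENNReal.ofReal (ω k ^ p.toReal) := by
  rw [wMeasure, Measure.sum_apply _ (measurableSet_singleton k),
    tsum_eq_single k fun j hj => by simp [hj]]
  simp

theorem ae_eq_wMeasure_iff [Countable I] (hω : ∀ k, 0 < ω k) {f g : I → ℂ} :
    f =ᵐ[wMeasure p ω] g ↔ f = g := by
  rw [EventuallyEq, ae_iff_of_countable, funext_iff]
  refine forall_congr' fun k => ⟨fun h => h ?_, fun h _ => h⟩
  rw [wMeasure_singleton]
  exact (ENNReal.ofReal_pos.2 (Real.rpow_pos_of_pos (hω k) _)).ne'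

theorem eLpNorm_wMeasure (hp0 : p ≠ 0) (hp : p ≠ ∞) (hω : ∀ k, 0 ≤ ω k) (f : I → ℂ) :
    eLpNorm f p (wMeasure p ω)
      = (∑' k, (ENNReal.ofReal (ω k) * ‖f k‖ₑ) ^ p.toReal) ^ p.toReal⁻¹ := by
  have hpt : 0 < p.toReal := ENNReal.toReal_pos hp0 hp
  rw [eLpNorm_eq_lintegral_rpow_enorm_toReal hp0 hp, one_div, wMeasure,
    lintegral_sum_measure]
  congr 1; refine tsum_congr fun k => ?_
  rw [lintegral_smul_measure, lintegral_dirac, smul_eq_mul,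
    ENNReal.mul_rpow_of_nonneg _ _ hpt.le, ENNReal.ofReal_rpow_of_nonneg (hω k) hpt.le]

theorem tsum_weight_mul_enorm_rpow_ne_top (hp0 : p ≠ 0) (hp : p ≠ ∞) (hω : ∀ k, 0 ≤ ω k)
    (z : Lp ℂ p (wMeasure p ω)) :
    ∑' k, (ENNReal.ofReal (ω k) * ‖z k‖ₑ) ^ p.toReal ≠ ∞ := by
  have h := Lp.eLpNorm_lt_top z
  rw [eLpNorm_wMeasure hp0 hp hω] at h
  exact (ENNReal.rpow_lt_top_iff_of_pos (inv_pos.2 (ENNReal.toReal_pos hp0 hp))).1 h |>.ne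

theorem weight_mul_norm_le_norm (hp0 : p ≠ 0) (hp : p ≠ ∞) (hω : ∀ k, 0 ≤ ω k)
    (z : Lp ℂ p (wMeasure p ω)) (k : I) : ω k * ‖z k‖ ≤ ‖z‖ := by
  have hpt : 0 < p.toReal := ENNReal.toReal_pos hp0 hp
  have hle : ENNReal.ofReal (ω k) * ‖z k‖ₑ ≤ eLpNorm z p (wMeasure p ω) := by
    rw [eLpNorm_wMeasure hp0 hp hω, ← ENNReal.rpow_rpow_inv hpt.ne' (_ * _)]
    gcongr
    exact ENNReal.le_tsum k
  rw [← toReal_ofReal_mul_enorm (hω k), Lp.norm_def]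
  exact ENNReal.toReal_mono (Lp.eLpNorm_ne_top z) hle

theorem tendsto_weight_mul_norm_cofinite (hp0 : p ≠ 0) (hp : p ≠ ∞) (hω : ∀ k, 0 ≤ ω k)
    (z : Lp ℂ p (wMeasure p ω)) : Tendsto (fun k => ω k * ‖z k‖) cofinite (𝓝 0) := by
  have hpt : 0 < p.toReal := ENNReal.toReal_pos hp0 hp
  have hpow := ENNReal.tendsto_cofinite_zero_of_tsum_ne_top
    (tsum_weight_mul_enorm_rpow_ne_top hp0 hp hω z)
  have hroot := (ENNReal.continuous_rpow_const (y := p.toReal⁻¹)).tendsto 0 |>.comp hpow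
  rw [ENNReal.zero_rpow_of_pos (inv_pos.2 hpt)] at hroot
  simp only [Function.comp_def, ENNReal.rpow_rpow_inv hpt.ne'] at hroot
  have hreal := (ENNReal.tendsto_toReal ENNReal.zero_ne_top).comp hroot
  rw [ENNReal.toReal_zero] at hreal
  exact hreal.congr fun k => toReal_ofReal_mul_enorm (hω k) _

theorem coeFn_smul_sub_apply [Countable I] [Fact (1 ≤ p)] (hω : ∀ k, 0 < ω k) (c : ℂ)
    (u v : Lp ℂ p (wMeasure p ω)) (k : I) :
    (c • u - v : Lp ℂ p (wMeasure p ω)) k = c * u k - v k :=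
  congrFun ((ae_eq_wMeasure_iff hω).1
    ((Lp.coeFn_sub _ _).trans ((Lp.coeFn_smul _ _).sub EventuallyEq.rfl))) k

end WeightedLp

theorem pow_apply_of_apply_eq_add_one {p : ℝ≥0∞} [Fact (1 ≤ p)] {μ : Measure ℤ}
    {B : Lp ℂ p μ →L[ℂ] Lp ℂ p μ} (hB : ∀ x k, B x k = x (k + 1)) (m : ℕ) (x : Lp ℂ p μ)
    (k : ℤ) : (B ^ m) x k = x (k + m) := by
  induction m generalizing x with
  | zero => simp
  | succ m ih => rw [pow_succ, mul_apply_eq_comp, ih, hB, Nat.cast_succ, add_assoc]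

theorem tendsto_norm_div_mul_weight_of_approx {ω : ℤ → ℝ} (hω : ∀ k, 0 ≤ ω k) {x y : ℤ → ℂ}
    (hy : Tendsto (fun k => ω k * ‖y k‖) cofinite (𝓝 0))
    {lam : ℕ → ℂ} {n : ℕ → ℕ} (hn : StrictMono n) {δ : ℕ → ℝ} (hδ : Tendsto δ atTop (𝓝 0))
    (happrox : ∀ j k, ω k * ‖lam j * x (k + n j) - y k‖ ≤ δ j) {i : ℕ} {k₀ : ℤ}
    (hi : δ i < ω k₀ * ‖y k₀‖) :
    Tendsto (fun j => ‖lam j‖ / ‖lam i‖ * ω (-(n j : ℤ) + n i + k₀)) atTop (𝓝 0) := by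
  set X := x (k₀ + n i)
  set m : ℕ → ℤ := fun j => -(n j : ℤ) + n i + k₀
  have hX : lam i * X ≠ 0 := by
    intro h0
    have hi' := happrox i k₀
    rw [h0, zero_sub, norm_neg] at hi'
    linarith
  have hm : Tendsto m atTop cofinite := by
    rw [← Nat.cofinite_eq_atTop]
    exact Function.Injective.tendsto_cofinite fun a b hab => hn.injective (by simpa [m] using hab)
  have hbound : ∀ j, ‖lam j‖ / ‖lam i‖ * ω (m j)
      ≤ (δ j + ω (m j) * ‖y (m j)‖) / ‖lam i * X‖ := by
    intro j
    have hj := happrox j (m j)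
    rw [show m j + n j = k₀ + n i by ring] at hj
    calc ‖lam j‖ / ‖lam i‖ * ω (m j) = ω (m j) * ‖lam j * X‖ / ‖lam i * X‖ := by
          rw [norm_mul, norm_mul]
          field_simp [norm_ne_zero_iff.2 (left_ne_zero_of_mul hX),
            norm_ne_zero_iff.2 (right_ne_zero_of_mul hX)]
      _ ≤ ω (m j) * (‖y (m j)‖ + ‖lam j * X - y (m j)‖) / ‖lam i * X‖ := by
          gcongr
          · exact hω _
          · exact norm_le_norm_add_norm_sub' _ _
      _ ≤ (δ j + ω (m j) * ‖y (m j)‖) / ‖lam i * X‖ := by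
          gcongr
          linarith
  have hlim : Tendsto (fun j => (δ j + ω (m j) * ‖y (m j)‖) / ‖lam i * X‖) atTop (𝓝 0) := by
    simpa using (hδ.add (hy.comp hm)).div_const ‖lam i * X‖
  exact squeeze_zero (fun j => mul_nonneg (by positivity) (hω _)) hbound hlim

theorem stmt12_general (p : ENNReal) [Fact (1 ≤ p)] (hp : p ≠ ∞) (ω : ℤ → ℝ) (hω : ∀ k, 0 < ω k)
    (B : Lp ℂ p (wMeasure p ω) →L[ℂ] Lp ℂ p (wMeasure p ω))
    (hB : ∀ (x : Lp ℂ p (wMeasure p ω)) (k : ℤ), B x k = x (k + 1))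
    (x y : Lp ℂ p (wMeasure p ω)) (k₀ : ℤ)
    (lam : ℕ → ℂ)
    (n : ℕ → ℕ) (hn : StrictMono n)
    (δ : ℕ → ℝ) (hδ0 : Tendsto δ atTop (nhds 0))
    (hδsmall : ∀ i, δ i < ω k₀ * ‖y k₀‖ / 2)
    (happrox : ∀ i, ‖lam i • (B ^ n i) x - y‖ < δ i) :
    ∀ i : ℕ, Tendsto
      (fun j => ‖lam j‖ / ‖lam i‖ *
        ω (-(n j : ℤ) + (n i : ℤ) + k₀)) atTop (nhds 0) := by
  intro i
  have hp0 : p ≠ 0 := (zero_lt_one.trans_le Fact.out).ne'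
  have hω' : ∀ k, 0 ≤ ω k := fun k => (hω k).le
  have hcoord : ∀ j k, ω k * ‖lam j * x (k + n j) - y k‖ ≤ δ j := fun j k => by
    rw [← pow_apply_of_apply_eq_add_one hB, ← coeFn_smul_sub_apply hω]
    exact (weight_mul_norm_le_norm hp0 hp hω' _ k).trans (happrox j).le
  exact tendsto_norm_div_mul_weight_of_approx hω' (tendsto_weight_mul_norm_cofinite hp0 hp hω' y)
    hn hδ0 hcoord ((hδsmall i).trans_le (half_le_self (mul_nonneg (hω' k₀) (norm_nonneg _))))

/-- under the approximation `‖λ_i • B ^ (n_i) x − y‖ < δ_i` with `δ_i → 0`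
and `δ_i < ω k₀ * |y k₀| / 2`, for each fixed `i` one has
`(|λ_j| / |λ_i|) * ω (−n_j + n_i + k₀) → 0` as `j → ∞`. -/
theorem stmt12 (p : ENNReal) [Fact (1 ≤ p)] (hp : p ≠ ∞) (ω : ℤ → ℝ) (hω : ∀ k, 0 < ω k)
    (hbdd : ∃ C : ℝ, ∀ k : ℤ, ω k / ω (k + 1) ≤ C)
    (B : Lp ℂ p (wMeasure p ω) →L[ℂ] Lp ℂ p (wMeasure p ω))
    (hB : ∀ (x : Lp ℂ p (wMeasure p ω)) (k : ℤ), B x k = x (k + 1))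
    (x y : Lp ℂ p (wMeasure p ω)) (k₀ : ℤ) (hk₀ : y k₀ ≠ 0)
    (lam : ℕ → ℂ) (hlam : ∀ i, lam i ≠ 0)
    (n : ℕ → ℕ) (hn : StrictMono n)
    (δ : ℕ → ℝ) (hδ0 : Tendsto δ atTop (nhds 0))
    (hδsmall : ∀ i, δ i < ω k₀ * ‖y k₀‖ / 2)
    (happrox : ∀ i, ‖lam i • (B ^ n i) x - y‖ < δ i) :
    ∀ i : ℕ, Tendsto
      (fun j => ‖lam j‖ / ‖lam i‖ *
        ω (-(n j : ℤ) + (n i : ℤ) + k₀)) atTop (nhds 0) :=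
  stmt12_general p hp ω hω B hB x y k₀ lam n hn δ hδ0 hδsmall happrox
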